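/- The number of parking functions π ∈ PF(m,n) with π_1 ∈ {1,2,...,n-m+1} is (n-m+1)(n-m+2)(n+1)^{m-2}, for m ≥ 2. -/

import Mathlib

/-- `π : [m] → [n]` is a parking function in `PF(m,n)`. -/
def IsPF (m n : ℕ) (π : Fin m → ℕ) : Prop :=
  (∀ k, 1 ≤ π k ∧ π k ≤ n) ∧
  ∀ i, i ≤ n → m + i ≤ (Finset.univ.filter (fun k => π k ≤ i)).card + n

open Finset

/-!
A first car preferring a spot `a ≤ n - m + 1` never blocks anyone: `Fin.cons a σ ∈ PF(m, n)`
iff `1 ≤ a` and `σ ∈ PF(m - 1, n)`, so the count is `(n - m + 1) · |PF(m - 1, n)|`.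

`|PF(p, n)| = (n + 1 - p) (n + 1) ^ (p - 1)` is Pollak's circle argument. Let `p` cars prefer spots
`f : Fin p → ZMod (n + 1)` on a circle; cutting the circle at spot `c` and reading spot `c + j`
as `j` (so `c` itself becomes `n + 1`) gives `rotate f c`. On the unrolled circle let `slack f t`
be `t` minus the number of cars preferring a spot below `t`: its up-steps are at most one and it
gains `n + 1 - p` per turn. `rotate f c` is a parking function iff the value of the walk one turn
after `c + 1` strictly exceeds its values on the preceding turn, i.e. is a strict record; as the
number of records up to `T` is the running maximum plus one, there are exactly `n + 1 - p` new
records per turn. Hence every `f` has `n + 1 - p` good cuts, while each cut sees every parking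
function exactly once.
-/

section Records

variable (S : ℕ → ℤ)

lemma card_records_range_eq_sup'_add_one (h0 : S 0 = 0) (hstep : ∀ t, S (t + 1) ≤ S t + 1)
    (T : ℕ) :
    (#{t ∈ range (T + 1) | ∀ v < t, S v < S t} : ℤ) =
      (range (T + 1)).sup' nonempty_range_add_one S + 1 := by
  induction T with
  | zero => simp [h0, filter_singleton]
  | succ T ih =>
    set M := (range (T + 1)).sup' nonempty_range_add_one S
    have hsup : (range (T + 1 + 1)).sup' nonempty_range_add_one S = S (T + 1) ⊔ M := by
      simp only [range_add_one (n := T + 1)]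
      exact sup'_insert nonempty_range_add_one S
    have hT : S T ≤ M := le_sup' S (self_mem_range_succ T)
    have hT1 := hstep T
    rw [hsup, range_add_one (n := T + 1), filter_insert]
    by_cases hrec : ∀ v < T + 1, S v < S (T + 1)
    · have hM : M < S (T + 1) := (sup'_lt_iff _).2 fun v hv => hrec v (mem_range.1 hv)
      rw [if_pos hrec, card_insert_of_notMem (by simp)]
      push_cast
      omega
    · have hM : S (T + 1) ≤ M := by
        push Not at hrec
        obtain ⟨v, hv, hle⟩ := hrec
        exact hle.trans (le_sup' S (mem_range.2 hv))
      rw [if_neg hrec]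
      omega

lemma sup'_range_add_eq_of_periodic (N D : ℕ) (hper : ∀ t, S (t + N) = S t + D) :
    (range (N + N + 1)).sup' nonempty_range_add_one S =
      (range (N + 1)).sup' nonempty_range_add_one S + D := by
  set M := (range (N + 1)).sup' nonempty_range_add_one S
  have hM : ∀ v ≤ N, S v ≤ M := fun v hv => le_sup' S (mem_range.2 (Nat.lt_succ_of_le hv))
  apply le_antisymm
  · refine sup'_le _ _ fun v hv => ?_
    rcases le_or_gt v N with hvN | hNv
    · linarith [hM v hvN]
    · obtain ⟨u, rfl⟩ : ∃ u, v = u + N := ⟨v - N, by omega⟩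
      have := hM u (by simp at hv; omega)
      rw [hper]
      omega
  · obtain ⟨u, hu, hSu⟩ := exists_mem_eq_sup' nonempty_range_add_one S (s := range (N + 1))
    have huN : u + N < N + N + 1 := by simp at hu; omega
    have hle : S (u + N) ≤ _ := le_sup' S (mem_range.2 huN)
    rw [hper, ← hSu] at hle
    exact hle

lemma card_window_records_eq_of_periodic (N D : ℕ) (h0 : S 0 = 0)
    (hstep : ∀ t, S (t + 1) ≤ S t + 1) (hper : ∀ t, S (t + N) = S t + D) :
    #{c ∈ range N | ∀ i < N, S (c + 1 + i) < S (c + 1) + D} = D := by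
  have hrecord : ∀ c ∈ range N,
      (∀ i < N, S (c + 1 + i) < S (c + 1) + D) ↔ ∀ v < N + 1 + c, S v < S (N + 1 + c) := by
    intro c hc
    have hc : c < N := mem_range.1 hc
    have hend : S (N + 1 + c) = S (c + 1) + D := by rw [← hper]; ring_nf
    rw [hend]
    refine ⟨fun h v hv => ?_, fun h i hi => h (c + 1 + i) (by omega)⟩
    rcases le_or_gt (c + 1) v with hcv | hvc
    · obtain ⟨i, rfl⟩ : ∃ i, v = c + 1 + i := ⟨v - (c + 1), by omega⟩
      exact h i (by omega)
    · have := h (v + N - (c + 1)) (by omega)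
      rw [show c + 1 + (v + N - (c + 1)) = v + N by omega, hper] at this
      omega
  have hsplit : #{t ∈ range (N + N + 1) | ∀ v < t, S v < S t} =
      #{t ∈ range (N + 1) | ∀ v < t, S v < S t} +
        #{c ∈ range N | ∀ v < N + 1 + c, S v < S (N + 1 + c)} := by
    simp only [card_filter, show N + N + 1 = N + 1 + N by ring, sum_range_add]
  have h2 := card_records_range_eq_sup'_add_one S h0 hstep (N + N)
  have h1 := card_records_range_eq_sup'_add_one S h0 hstep N
  rw [hsplit, sup'_range_add_eq_of_periodic S N D hper] at h2
  rw [filter_congr hrecord]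
  push_cast at h2
  omega

end Records

lemma isPF_iff_of_one_le {m n : ℕ} {π : Fin m → ℕ} (h : ∀ k, 1 ≤ π k) :
    IsPF m n π ↔ ∀ i ≤ n, m + i ≤ #{k | π k ≤ i} + n := by
  refine ⟨And.right, fun H => ⟨fun k => ⟨h k, ?_⟩, H⟩⟩
  have hall : #{k | π k ≤ n} = #(univ : Finset (Fin m)) := by
    have := H n le_rfl
    have := card_filter_le (univ : Finset (Fin m)) (π · ≤ n)
    rw [card_univ, Fintype.card_fin] at *
    omega
  exact card_filter_eq_iff.1 hall k (mem_univ k)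

instance (m n : ℕ) : DecidablePred (IsPF m n) := fun _ => by
  unfold IsPF
  infer_instance

section Circle

variable {n p : ℕ} (f : Fin p → ZMod (n + 1))

def spotCount (j : ℕ) : ℕ := #{k | f k = j}

def slack (t : ℕ) : ℤ := t - ∑ j ∈ range t, (spotCount f j : ℤ)

def rotate (c : ℕ) : Fin p → ℕ := fun k => (f k - c - 1).val + 1

lemma card_filter_val_sub_lt (a : ℕ) {i : ℕ} (hi : i ≤ n + 1) :
    #{k | (f k - a).val < i} = ∑ j ∈ Ico a (a + i), spotCount f j := by
  rw [sum_Ico_eq_sum_range, add_tsub_cancel_left,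
    card_eq_sum_card_fiberwise (f := fun k => (f k - a).val) (t := range i)
      fun k hk => by simpa using hk]
  refine sum_congr rfl fun j hji => ?_
  have hj : j < n + 1 := (mem_range.1 hji).trans_le hi
  simp only [spotCount, filter_filter]
  congr 1
  refine filter_congr fun k _ => ?_
  constructor
  · rintro ⟨-, h⟩
    rw [Nat.cast_add, ← h, ZMod.natCast_zmod_val]
    ring
  · rintro h
    rw [h, Nat.cast_add, add_sub_cancel_left, ZMod.val_natCast_of_lt hj]
    exact ⟨mem_range.1 hji, rfl⟩

lemma slack_zero : slack f 0 = 0 := by simp [slack]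

lemma slack_succ_le (t : ℕ) : slack f (t + 1) ≤ slack f t + 1 := by
  simp only [slack, sum_range_succ]
  push_cast
  linarith [(spotCount f t).cast_nonneg (α := ℤ)]

lemma slack_add_period (hp : p ≤ n + 1) (t : ℕ) :
    slack f (t + (n + 1)) = slack f t + (n + 1 - p : ℕ) := by
  have hwind : ∑ j ∈ Ico t (t + (n + 1)), spotCount f j = p := by
    rw [← card_filter_val_sub_lt f t le_rfl, filter_true_of_mem fun k _ => ZMod.val_lt _,
      card_univ, Fintype.card_fin]
  simp only [slack, ← sum_range_add_sum_Ico _ (Nat.le_add_right t (n + 1))]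
  have := congrArg (Nat.cast : ℕ → ℤ) hwind
  push_cast [hp] at this ⊢
  linarith

lemma isPF_rotate_iff (c : ℕ) :
    IsPF p n (rotate f c) ↔ ∀ i ≤ n, slack f (c + 1 + i) + p ≤ slack f (c + 1) + n := by
  rw [isPF_iff_of_one_le (π := rotate f c) fun k => Nat.le_add_left 1 _]
  refine forall₂_congr fun i hi => ?_
  have hcount : #{k | rotate f c k ≤ i} = ∑ j ∈ Ico (c + 1) (c + 1 + i), spotCount f j := by
    rw [← card_filter_val_sub_lt f (c + 1) (by omega)]
    refine congrArg card (filter_congr fun k _ => ?_)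
    rw [rotate, Nat.cast_succ, ← sub_sub]
    omega
  have hslack : slack f (c + 1 + i) =
      slack f (c + 1) + i - (∑ j ∈ Ico (c + 1) (c + 1 + i), spotCount f j : ℕ) := by
    simp only [slack, ← sum_range_add_sum_Ico _ (Nat.le_add_right (c + 1) i)]
    push_cast
    ring
  rw [hcount]
  omega

lemma card_filter_isPF_rotate (hp : p ≤ n + 1) :
    #{c ∈ range (n + 1) | IsPF p n (rotate f c)} = n + 1 - p := by
  rw [← card_window_records_eq_of_periodic (slack f) (n + 1) (n + 1 - p) (slack_zero f)
    (slack_succ_le f) (slack_add_period f hp)]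
  refine congrArg card (filter_congr fun c _ => ?_)
  rw [isPF_rotate_iff]
  push_cast [hp]
  exact ⟨fun h i hi => by linarith [h i (by omega)], fun h i hi => by linarith [h i (by omega)]⟩

lemma ncard_isPF_eq_card_filter_rotate (c : ℕ) :
    {π : Fin p → ℕ | IsPF p n π}.ncard =
      #{f : Fin p → ZMod (n + 1) | IsPF p n (rotate f c)} := by
  have hinj : Function.Injective fun f : Fin p → ZMod (n + 1) => rotate f c := by
    intro f g hfg
    funext k
    have := congrFun hfg k
    simp only [rotate, Nat.add_right_cancel_iff] at this
    simpa using ZMod.val_injective _ this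
  have hrange : {π : Fin p → ℕ | IsPF p n π} ⊆
      Set.range fun f : Fin p → ZMod (n + 1) => rotate f c := by
    intro π hπ
    refine ⟨fun k => (π k : ZMod (n + 1)) + c, funext fun k => ?_⟩
    obtain ⟨h1, h2⟩ := hπ.1 k
    have : (π k : ZMod (n + 1)) + c - c - 1 = ((π k - 1 : ℕ) : ZMod (n + 1)) := by
      rw [Nat.cast_sub h1]
      ring
    simp only [rotate, this, ZMod.val_natCast_of_lt (show π k - 1 < n + 1 by omega)]
    omega
  rw [← Set.ncard_preimage_of_injective_subset_range hinj hrange, ← Set.ncard_coe_finset]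
  congr
  ext
  simp

theorem ncard_isPF (hp0 : 0 < p) (hp : p ≤ n + 1) :
    {π : Fin p → ℕ | IsPF p n π}.ncard = (n + 1 - p) * (n + 1) ^ (p - 1) := by
  refine Nat.eq_of_mul_eq_mul_left n.succ_pos ?_
  calc (n + 1) * {π : Fin p → ℕ | IsPF p n π}.ncard
      = ∑ c ∈ range (n + 1), #{f : Fin p → ZMod (n + 1) | IsPF p n (rotate f c)} := by
        simp [← ncard_isPF_eq_card_filter_rotate]
    _ = ∑ f : Fin p → ZMod (n + 1), #{c ∈ range (n + 1) | IsPF p n (rotate f c)} := by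
        simp only [card_filter]
        exact sum_comm
    _ = (n + 1) ^ p * (n + 1 - p) := by
        simp [card_filter_isPF_rotate _ hp]
    _ = (n + 1) * ((n + 1 - p) * (n + 1) ^ (p - 1)) := by
        obtain ⟨q, rfl⟩ : ∃ q, p = q + 1 := ⟨p - 1, by omega⟩
        simp only [add_tsub_cancel_right, pow_succ]
        ring

end Circle

lemma isPF_cons_iff {m n a : ℕ} (σ : Fin m → ℕ) (ha : a ≤ n - m) :
    IsPF (m + 1) n (Fin.cons a σ) ↔ 1 ≤ a ∧ IsPF m n σ := by
  have hcount : ∀ i, #{k | (Fin.cons a σ : Fin (m + 1) → ℕ) k ≤ i} =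
      (if a ≤ i then 1 else 0) + #{k | σ k ≤ i} := by
    simp only [card_filter, Fin.sum_univ_succ, Fin.cons_zero, Fin.cons_succ, implies_true]
  simp only [IsPF, Fin.forall_fin_succ, Fin.cons_zero, Fin.cons_succ, hcount]
  constructor
  · rintro ⟨⟨⟨ha1, -⟩, hσ⟩, h⟩
    refine ⟨ha1, hσ, fun i hi => ?_⟩
    have := h i hi
    split_ifs at this <;> omega
  · rintro ⟨ha1, hσ, h⟩
    refine ⟨⟨⟨ha1, by omega⟩, hσ⟩, fun i hi => ?_⟩
    have := h i hi
    split_ifs <;> omega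

theorem card_PF_first_le (m n : ℕ) (hm : 2 ≤ m) (hmn : m ≤ n) :
    {π : Fin m → ℕ | IsPF m n π ∧ π ⟨0, by omega⟩ ≤ n - m + 1}.ncard =
      (n - m + 1) * (n - m + 2) * (n + 1) ^ (m - 2) := by
  obtain ⟨m, rfl⟩ : ∃ m', m = m' + 1 := ⟨m - 1, by omega⟩
  have hset :
      {π : Fin (m + 1) → ℕ | IsPF (m + 1) n π ∧ π ⟨0, by omega⟩ ≤ n - (m + 1) + 1} =
      (Fin.consEquiv fun _ => ℕ).symm ⁻¹' (Set.Icc 1 (n - m) ×ˢ {σ | IsPF m n σ}) := by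
    ext π
    obtain ⟨a, σ, rfl⟩ : ∃ a σ, π = Fin.cons a σ :=
      ⟨π 0, Fin.tail π, (Fin.cons_self_tail π).symm⟩
    simp only [Set.mem_ofPred_eq, Set.mem_preimage, Fin.consEquiv_symm_apply, Set.mem_prod,
      Set.mem_Icc, Fin.tail_cons, Fin.zero_eta, Fin.cons_zero,
      show n - (m + 1) + 1 = n - m by omega]
    constructor
    · rintro ⟨hπ, ha⟩
      exact ⟨⟨((isPF_cons_iff σ ha).1 hπ).1, ha⟩, ((isPF_cons_iff σ ha).1 hπ).2⟩
    · rintro ⟨⟨ha1, ha⟩, hσ⟩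
      exact ⟨(isPF_cons_iff σ ha).2 ⟨ha1, hσ⟩, ha⟩
  rw [hset, Set.ncard_preimage_of_injective_subset_range (Equiv.injective _) (by simp),
    Set.ncard_prod, Set.ncard_Icc_nat, ncard_isPF (by omega) (by omega),
    show n - m + 1 - 1 = n - (m + 1) + 1 by omega, show n + 1 - m = n - (m + 1) + 2 by omega,
    show m + 1 - 2 = m - 1 by omega, mul_assoc]
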